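/- arXiv:1902.02862 — 4 statements merged into one kernel-verified Lean document; each statement's English description precedes it below -/
import Mathlib

section
/- Let k ≤ n and let B be a k×n real matrix whose columns span ℝ^k and which satisfies B·Bᵀ = γ·I_k for some real γ > 0 (i.e., the columns of B form a tight frame for ℝ^k). Suppose the additive subgroup B(ℤ^n) = {B·a : a ∈ ℤ^n} of ℝ^k is discrete. Then every entry of the Gram matrix Bᵀ·B is a rational multiple of γ; that is, (1/γ)·Bᵀ·B has all entries in ℚ. -/
/-!
The integer span `L` of the columns of `B` is a full lattice in `ℝ^k`, so `B = V M` with `V` the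
matrix of a `ℤ`-basis of `L` and `M` an integer matrix. Tightness reads `V (M Mᵀ) Vᵀ = γ I`,
which forces `Vᵀ V = γ (M Mᵀ)⁻¹`; hence `Bᵀ B = Mᵀ (Vᵀ V) M = γ Mᵀ (M Mᵀ)⁻¹ M` with
`Mᵀ (M Mᵀ)⁻¹ M` rational.
-/

open Submodule

namespace Matrix

variable {m n : Type*}

section Field

variable [Fintype m] [DecidableEq m]

theorem map_inv {K L : Type*} [Field K] [Field L] (f : K →+* L) (A : Matrix m m K) :
    (A.map f)⁻¹ = A⁻¹.map f := by
  rw [inv_def, inv_def, Ring.inverse_eq_inv', Ring.inverse_eq_inv', ← RingHom.mapMatrix_apply,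
    ← RingHom.map_adjugate, ← RingHom.map_det, ← map_inv₀]
  ext i j
  simp

theorem mul_eq_smul_inv_of_mul_mul_eq_smul_one {K : Type*} [Field K] {V A W : Matrix m m K}
    {γ : K} (hγ : γ ≠ 0) (h : V * A * W = γ • 1) : W * V = γ • A⁻¹ := by
  have hV : V * (γ⁻¹ • (A * W)) = 1 := by
    rw [Matrix.mul_smul, ← Matrix.mul_assoc, h, smul_smul, inv_mul_cancel₀ hγ, one_smul]
  have hA : A * (γ⁻¹ • (W * V)) = 1 := by
    rw [Matrix.mul_smul, ← Matrix.mul_assoc]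
    simpa only [Matrix.smul_mul] using mul_eq_one_comm.mp hV
  rw [inv_eq_right_inv hA, smul_smul, mul_inv_cancel₀ hγ, one_smul]

theorem transpose_mul_self_eq_smul_map {K L : Type*} [Field K] [Field L] (f : K →+* L)
    [Fintype n] {V : Matrix m m L} {Q : Matrix m n K} {γ : L} (hγ : γ ≠ 0)
    (h : (V * Q.map f) * (V * Q.map f)ᵀ = γ • 1) :
    (V * Q.map f)ᵀ * (V * Q.map f) = γ • (Qᵀ * (Q * Qᵀ)⁻¹ * Q).map f := by
  have hA : V * (Q * Qᵀ).map f * Vᵀ = γ • 1 := by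
    simpa only [transpose_mul, Matrix.map_mul, transpose_map, Matrix.mul_assoc] using h
  have hVV := mul_eq_smul_inv_of_mul_mul_eq_smul_one hγ hA
  rw [map_inv] at hVV
  calc (V * Q.map f)ᵀ * (V * Q.map f) = (Q.map f)ᵀ * (Vᵀ * V) * Q.map f := by
        simp only [transpose_mul, Matrix.mul_assoc]
    _ = γ • (Qᵀ * (Q * Qᵀ)⁻¹ * Q).map f := by
        rw [hVV, Matrix.mul_smul, Matrix.smul_mul, Matrix.map_mul, Matrix.map_mul, transpose_map]

end Field

theorem mulVec_intCast_eq_sum_zsmul_col [Fintype n] (B : Matrix m n ℝ) (a : n → ℤ) :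
    (B *ᵥ fun j => (a j : ℝ)) = ∑ j, a j • B.col j := by
  ext i
  simp [mulVec, dotProduct, Finset.sum_apply, mul_comm]

theorem coe_span_int_range_col [Fintype n] (B : Matrix m n ℝ) :
    (span ℤ (Set.range B.col) : Set (m → ℝ)) =
      Set.range fun a : n → ℤ => B *ᵥ fun j => (a j : ℝ) := by
  ext x
  simp only [SetLike.mem_coe, mem_span_range_iff_exists_fun, Set.mem_range,
    mulVec_intCast_eq_sum_zsmul_col]

theorem exists_eq_mul_map_intCast_of_col_mem [Fintype m] (L : Submodule ℤ (m → ℝ))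
    [DiscreteTopology L] [IsZLattice ℝ L] (B : Matrix m n ℝ) (hB : ∀ j, B.col j ∈ L) :
    ∃ (V : Matrix m m ℝ) (M : Matrix m n ℤ), B = V * M.map (Int.cast : ℤ → ℝ) := by
  let b := IsZLattice.basis L
  refine ⟨of fun i p => (b p : m → ℝ) i, of fun p j => b.repr ⟨B.col j, hB j⟩ p, ?_⟩
  ext i j
  have := congrArg (fun x : L => (x : m → ℝ) i) (b.sum_repr ⟨B.col j, hB j⟩)
  simp only [coe_sum, coe_smul, Finset.sum_apply, Pi.smul_apply] at this
  simp only [mul_apply, of_apply, map_apply, zsmul_eq_mul] at this ⊢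
  rw [← col_apply B j i, ← this]
  exact Finset.sum_congr rfl fun p _ => mul_comm _ _

end Matrix

open Matrix

theorem stmt_0_general (k n : ℕ) (B : Matrix (Fin k) (Fin n) ℝ)
    (hspan : Submodule.span ℝ (Set.range fun j : Fin n => fun i : Fin k => B i j) = ⊤)
    (γ : ℝ) (hγ : 0 < γ)
    (htight : B * B.transpose = γ • (1 : Matrix (Fin k) (Fin k) ℝ))
    (hdisc : DiscreteTopology
      ↥(Set.range fun a : Fin n → ℤ => B.mulVec fun i => (a i : ℝ))) :
    ∀ i j : Fin n, ∃ q : ℚ, (B.transpose * B) i j = γ * q := by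
  let L := span ℤ (Set.range B.col)
  have : DiscreteTopology L := by rwa [← coe_span_int_range_col] at hdisc
  have : IsZLattice ℝ L := ⟨by rw [span_span_of_tower]; exact hspan⟩
  obtain ⟨V, M, rfl⟩ := exists_eq_mul_map_intCast_of_col_mem L B fun j => subset_span ⟨j, rfl⟩
  have hM : M.map (Int.cast : ℤ → ℝ) = (M.map (Int.cast : ℤ → ℚ)).map (Rat.castHom ℝ) := by
    ext; simp
  rw [hM] at htight ⊢
  have hgram := transpose_mul_self_eq_smul_map (Rat.castHom ℝ) hγ.ne' htight
  intro i j
  exact ⟨_, by rw [hgram]; rfl⟩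

/-- A tight frame generating a lattice must be rational: if `B * Bᵀ = γ • 1` with `γ > 0`,
the columns of `B` span `ℝ^k`, and the integer span of the columns of `B` is discrete,
then every entry of `Bᵀ * B` is a rational multiple of `γ`. -/
theorem stmt_0 (k n : ℕ) (hkn : k ≤ n) (B : Matrix (Fin k) (Fin n) ℝ)
    (hspan : Submodule.span ℝ (Set.range fun j : Fin n => fun i : Fin k => B i j) = ⊤)
    (γ : ℝ) (hγ : 0 < γ)
    (htight : B * B.transpose = γ • (1 : Matrix (Fin k) (Fin k) ℝ))
    (hdisc : DiscreteTopology
      ↥(Set.range fun a : Fin n → ℤ => B.mulVec fun i => (a i : ℝ))) :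
    ∀ i j : Fin n, ∃ q : ℚ, (B.transpose * B) i j = γ * q :=
  stmt_0_general k n B hspan γ hγ htight hdisc
end

section
/- Let k, m ≥ 1, n = k + m, and let B = [B₀ | B₁] be a k×n real matrix whose first k columns form an invertible k×k matrix B₀ and whose last m columns form the k×m matrix B₁. If the additive subgroup B(ℤ^n) = {B·a : a ∈ ℤ^n} of ℝ^k is discrete, then the matrix B₀⁻¹·B₁ has all entries in ℚ. -/
/-!
The integer span `L` of the columns of `B` is discrete and contains the columns of `B₀`, which
span `ℝ^k`; so `L` is a full-rank lattice and the sublattice `L₀` spanned by the columns of `B₀`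
has the same rank, hence finite index `N` in `L`. Then `N` times any column of `B₁` lies in `L₀`,
i.e. `N • B₀⁻¹ * B₁` has integer entries.
-/

open Submodule Module Matrix

theorem Submodule.exists_nsmul_mem_of_le_of_span_eq_top
    {E : Type*} [NormedAddCommGroup E] [NormedSpace ℝ E] [FiniteDimensional ℝ E]
    {L₀ L : Submodule ℤ E} [DiscreteTopology L] (hle : L₀ ≤ L)
    (hspan : span ℝ (L₀ : Set E) = ⊤) {x : E} (hx : x ∈ L) :
    ∃ n : ℕ, n ≠ 0 ∧ n • x ∈ L₀ := by
  have : DiscreteTopology L₀ := .of_subset ‹_› hle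
  have : IsZLattice ℝ L₀ := ⟨hspan⟩
  have : IsZLattice ℝ L := ⟨eq_top_iff.mpr (hspan ▸ span_mono hle)⟩
  have : Module.Finite ℤ L := ZLattice.module_finite ℝ L
  let N := L₀.comap L.subtype
  have hrank : finrank ℤ N = finrank ℤ L := by
    rw [(comapSubtypeEquivOfLe hle).finrank_eq, ZLattice.rank ℝ L₀, ZLattice.rank ℝ L]
  have : Finite (L ⧸ N) := finiteQuotientOfFreeOfRankEq N hrank
  exact ⟨N.toAddSubgroup.index, AddSubgroup.index_ne_zero_of_finite (hH := this),
    N.toAddSubgroup.nsmul_index_mem ⟨x, hx⟩⟩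

theorem Matrix.range_mulVec_intCast {R m n : Type*} [CommRing R] [Fintype n]
    (A : Matrix m n R) :
    Set.range (fun a : n → ℤ => A *ᵥ fun i => (a i : R)) = span ℤ (Set.range A.col) := by
  ext x
  rw [SetLike.mem_coe, mem_span_range_iff_exists_fun]
  refine exists_congr fun c => Eq.congr_left ?_
  ext s
  simp [mulVec, dotProduct, Finset.sum_apply, mul_comm]

theorem stmt_1_general (k m : ℕ)
    (B₀ : Matrix (Fin k) (Fin k) ℝ) (B₁ : Matrix (Fin k) (Fin m) ℝ)
    (hB₀ : IsUnit B₀)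
    (hdisc : DiscreteTopology
      ↥(Set.range fun a : Fin k ⊕ Fin m → ℤ =>
          (Matrix.fromCols B₀ B₁).mulVec fun i => (a i : ℝ))) :
    ∀ (i : Fin k) (j : Fin m), ∃ q : ℚ, (B₀⁻¹ * B₁) i j = q := by
  intro i j
  rw [range_mulVec_intCast] at hdisc
  have hle : span ℤ (Set.range B₀.col) ≤ span ℤ (Set.range (fromCols B₀ B₁).col) :=
    span_mono <| Set.range_subset_iff.2 fun r => ⟨Sum.inl r, rfl⟩
  have hspan : span ℝ (span ℤ (Set.range B₀.col) : Set (Fin k → ℝ)) = ⊤ := by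
    rw [span_span_of_tower, ← range_mulVecLin, LinearMap.range_eq_top]
    exact mulVec_surjective_iff_isUnit.2 hB₀
  obtain ⟨n, hn, hnx⟩ := exists_nsmul_mem_of_le_of_span_eq_top hle hspan
    (subset_span ⟨Sum.inr j, rfl⟩ : B₁.col j ∈ span ℤ (Set.range (fromCols B₀ B₁).col))
  rw [← SetLike.mem_coe, ← range_mulVec_intCast] at hnx
  obtain ⟨c, hc⟩ := hnx
  have : Invertible B₀ := hB₀.invertible
  have hcol : (n : ℝ) • (B₀⁻¹ *ᵥ B₁.col j) = fun r => (c r : ℝ) := by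
    rw [← mulVec_smul, Nat.cast_smul_eq_nsmul, ← hc]
    exact inv_mulVec_eq_vec rfl
  refine ⟨c i / n, ?_⟩
  have hentry : (n : ℝ) * (B₀⁻¹ * B₁) i j = c i := congrFun hcol i
  push_cast
  rw [eq_div_iff (Nat.cast_ne_zero.2 hn), ← hentry, mul_comm]

/-- If `B = [B₀ | B₁]` with `B₀` invertible and the integer span of the columns of `B`
is discrete, then `B₀⁻¹ * B₁` has rational entries. -/
theorem stmt_1 (k m : ℕ) (hk : 1 ≤ k) (hm : 1 ≤ m)
    (B₀ : Matrix (Fin k) (Fin k) ℝ) (B₁ : Matrix (Fin k) (Fin m) ℝ)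
    (hB₀ : IsUnit B₀)
    (hdisc : DiscreteTopology
      ↥(Set.range fun a : Fin k ⊕ Fin m → ℤ =>
          (Matrix.fromCols B₀ B₁).mulVec fun i => (a i : ℝ))) :
    ∀ (i : Fin k) (j : Fin m), ∃ q : ℚ, (B₀⁻¹ * B₁) i j = q :=
  stmt_1_general k m B₀ B₁ hB₀ hdisc
end

section
/- Let k ≤ n and let B be a k×n real matrix whose columns span ℝ^k and satisfy B·Bᵀ = I_k (a Parseval tight frame). Then the additive subgroup B(ℤ^n) = {B·a : a ∈ ℤ^n} of ℝ^k is discrete if and only if the Gram matrix Bᵀ·B has all entries in ℚ (equivalently, all pairwise inner products of the columns of B are rational). -/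
/-!
If the Gram matrix `G = Bᵀ B` is rational, clearing denominators gives `d ≠ 0` with `d • G`
integral, so `d ‖B a‖² = d aᵀ G a` is an integer for `a ∈ ℤⁿ`; hence nonzero points of `B(ℤⁿ)`
satisfy `‖B a‖² ≥ 1 / |d|` and `B(ℤⁿ)` is discrete. Conversely, a discrete spanning subgroup of
`ℝᵏ` is a lattice with a `ℤ`-basis of `k` vectors, the columns of some `M`, so `B = M C` with `C`
integral. The Parseval identity `M (C Cᵀ) Mᵀ = 1` gives `(C Cᵀ)⁻¹ = Mᵀ M`, hence
`Bᵀ B = Cᵀ (C Cᵀ)⁻¹ C`, which is rational because `C Cᵀ` is.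
-/

open Matrix

theorem Matrix.map_inv_of_field {n K L : Type*} [Fintype n] [DecidableEq n] [Field K] [Field L]
    (f : K →+* L) (A : Matrix n n K) : A⁻¹.map f = (A.map f)⁻¹ := by
  rw [inv_def, inv_def, Matrix.map_smul' _ _ _ (map_mul f), ← f.mapMatrix_apply,
    ← f.mapMatrix_apply, ← f.map_det, ← f.map_adjugate]
  simp [Ring.inverse_eq_inv']

theorem Matrix.transpose_mul_self_eq_of_mul_transpose_eq_one {m n R : Type*} [Fintype m]
    [Fintype n] [DecidableEq m] [CommRing R] {B : Matrix m n R} {M : Matrix m m R}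
    {C : Matrix m n R} (hB : B = M * C) (h : B * Bᵀ = 1) : Bᵀ * B = Cᵀ * (C * Cᵀ)⁻¹ * C := by
  subst hB
  have h1 : C * Cᵀ * (Mᵀ * M) = 1 := by
    rw [transpose_mul, Matrix.mul_assoc, ← Matrix.mul_assoc C, mul_eq_one_comm] at h
    simpa only [Matrix.mul_assoc] using h
  rw [inv_eq_right_inv h1, transpose_mul]
  simp only [Matrix.mul_assoc]

theorem Matrix.mulVec_dotProduct_mulVec_self {m n R : Type*} [Fintype m] [Fintype n]
    [CommSemiring R] (B : Matrix m n R) (v : n → R) :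
    (B *ᵥ v) ⬝ᵥ (B *ᵥ v) = v ⬝ᵥ ((Bᵀ * B) *ᵥ v) := by
  rw [← mulVec_mulVec, dotProduct_mulVec, ← mulVec_transpose, dotProduct_comm]

theorem Matrix.exists_int_smul_eq_map_intCast {m n : Type*} [Finite m] [Finite n]
    {A : Matrix m n ℝ} (hA : ∀ i j, ∃ q : ℚ, A i j = q) :
    ∃ d : ℤ, d ≠ 0 ∧ ∃ Z : Matrix m n ℤ, (d : ℝ) • A = Z.map (Int.cast : ℤ → ℝ) := by
  choose q hq using hA
  obtain ⟨⟨d, hd⟩, hZ⟩ := IsLocalization.exist_integer_multiples_of_finite (nonZeroDivisors ℤ)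
    (fun p : m × n => q p.1 p.2)
  choose z hz using hZ
  refine ⟨d, nonZeroDivisors.ne_zero hd, Matrix.of fun i j => z (i, j), ?_⟩
  ext i j
  have hzij : (z (i, j) : ℚ) = d * q i j := by simpa using hz (i, j)
  simp only [smul_apply, smul_eq_mul, map_apply, of_apply, hq]
  exact_mod_cast hzij.symm

theorem Matrix.range_mulVec_intCast_eq_span {m n R : Type*} [Fintype n] [Ring R]
    (B : Matrix m n R) :
    Set.range (fun a : n → ℤ => B *ᵥ fun i => (a i : R)) =
      Submodule.span ℤ (Set.range fun j : n => fun i : m => B i j) := by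
  ext x
  rw [SetLike.mem_coe, Submodule.mem_span_range_iff_exists_fun, Set.mem_range]
  refine exists_congr fun a => ?_
  rw [eq_comm, eq_comm (b := x)]
  congr! 1
  ext i
  simp [mulVec, dotProduct, Finset.sum_apply, zsmul_eq_mul, Int.cast_comm]

theorem AddSubgroup.discreteTopology_of_forall_le {G : Type*} [TopologicalSpace G] [AddGroup G]
    [IsTopologicalAddGroup G] (H : AddSubgroup G) {f : G → ℝ} (hf : Continuous f) {c : ℝ}
    (hc : f 0 < c) (h : ∀ x ∈ H, x ≠ 0 → c ≤ f x) : DiscreteTopology H := by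
  refine discreteTopology_iff_isOpen_singleton_zero.mpr ?_
  have : ({0} : Set H) = Subtype.val ⁻¹' {x | f x < c} := by
    ext ⟨x, hx⟩
    simp only [Set.mem_singleton_iff, Set.mem_preimage, Set.mem_ofPred_eq]
    constructor
    · rintro ⟨⟩; exact hc
    · intro hlt
      by_contra hne
      exact (h x hx (by simpa using hne)).not_gt hlt
  rw [this]
  exact (isOpen_lt hf continuous_const).preimage continuous_subtype_val

theorem Matrix.exists_eq_mul_map_intCast_of_discreteTopology {k : ℕ} {n : Type*} [Fintype n]
    (B : Matrix (Fin k) n ℝ)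
    (hspan : Submodule.span ℝ (Set.range fun j : n => fun i : Fin k => B i j) = ⊤)
    [DiscreteTopology (Submodule.span ℤ (Set.range fun j : n => fun i : Fin k => B i j))] :
    ∃ (M : Matrix (Fin k) (Fin k) ℝ) (C : Matrix (Fin k) n ℤ),
      B = M * C.map (Int.cast : ℤ → ℝ) := by
  set L := Submodule.span ℤ (Set.range fun j : n => fun i : Fin k => B i j)
  have : IsZLattice ℝ L := ⟨by rw [Submodule.span_span_of_tower, hspan]⟩
  have : Module.Free ℤ L := ZLattice.module_free ℝ L
  have : Module.Finite ℤ L := ZLattice.module_finite ℝ L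
  let b : Module.Basis (Fin k) ℤ L :=
    Module.finBasisOfFinrankEq ℤ L ((ZLattice.rank ℝ L).trans (Module.finrank_fin_fun ℝ))
  let col (j : n) : L := ⟨fun i => B i j, Submodule.subset_span (Set.mem_range_self j)⟩
  refine ⟨Matrix.of fun i l => (b l : Fin k → ℝ) i, Matrix.of fun l j => b.repr (col j) l, ?_⟩
  ext i j
  have hcol := congr_arg (fun x : L => (x : Fin k → ℝ) i) (b.sum_repr (col j))
  simp only [Submodule.coe_sum, Submodule.coe_smul, Finset.sum_apply, zsmul_eq_mul] at hcol
  exact hcol.symm.trans (by simp [mul_apply, mul_comm])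

theorem Matrix.exists_rat_transpose_mul_self_of_eq_mul_map_intCast {m n : Type*} [Fintype m]
    [Fintype n] [DecidableEq m] {B : Matrix m n ℝ} {M : Matrix m m ℝ} {C : Matrix m n ℤ}
    (hB : B = M * C.map (Int.cast : ℤ → ℝ)) (h : B * Bᵀ = 1) :
    ∀ i j, ∃ q : ℚ, (Bᵀ * B) i j = q := by
  set Cq := C.map (Int.cast : ℤ → ℚ)
  have hC : C.map (Int.cast : ℤ → ℝ) = Cq.map (Rat.castHom ℝ) := by
    ext; simp [Cq]
  have hG : Bᵀ * B = (Cqᵀ * (Cq * Cqᵀ)⁻¹ * Cq).map (Rat.castHom ℝ) := by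
    rw [transpose_mul_self_eq_of_mul_transpose_eq_one hB h, hC, Matrix.map_mul, Matrix.map_mul,
      map_inv_of_field, Matrix.map_mul, transpose_map]
  exact fun i j => ⟨_, by rw [hG]; rfl⟩

theorem Matrix.one_div_abs_le_dotProduct_self {m n : Type*} [Fintype m] [Fintype n]
    {B : Matrix m n ℝ} {d : ℤ} (hd : d ≠ 0) {Z : Matrix n n ℤ}
    (hZ : (d : ℝ) • (Bᵀ * B) = Z.map (Int.cast : ℤ → ℝ)) {x : m → ℝ}
    (hx : x ∈ Submodule.span ℤ (Set.range fun j : n => fun i : m => B i j)) (hx0 : x ≠ 0) :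
    1 / |(d : ℝ)| ≤ x ⬝ᵥ x := by
  rw [← SetLike.mem_coe, ← range_mulVec_intCast_eq_span] at hx
  obtain ⟨a, rfl⟩ := hx
  set x := B *ᵥ fun i => (a i : ℝ)
  have hN : (d : ℝ) * (x ⬝ᵥ x) = (a ⬝ᵥ (Z *ᵥ a) : ℤ) := by
    rw [mulVec_dotProduct_mulVec_self, ← smul_eq_mul, ← dotProduct_smul, ← smul_mulVec, hZ]
    simp [dotProduct, mulVec]
  have hpos : 0 < x ⬝ᵥ x := by simpa using dotProduct_star_self_pos_iff.mpr hx0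
  have hN0 : a ⬝ᵥ (Z *ᵥ a) ≠ 0 := by
    rintro h
    rw [h, Int.cast_zero] at hN
    exact hpos.ne' ((mul_eq_zero.mp hN).resolve_left (Int.cast_ne_zero.mpr hd))
  calc 1 / |(d : ℝ)| ≤ |((a ⬝ᵥ (Z *ᵥ a) : ℤ) : ℝ)| / |(d : ℝ)| := by
        gcongr
        exact_mod_cast Int.one_le_abs hN0
    _ = x ⬝ᵥ x := by
        rw [← hN, abs_mul, abs_of_pos hpos]
        field_simp

theorem Matrix.discreteTopology_span_of_rat_transpose_mul_self {m n : Type*} [Fintype m]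
    [Fintype n] {B : Matrix m n ℝ} (hrat : ∀ i j, ∃ q : ℚ, (Bᵀ * B) i j = q) :
    DiscreteTopology (Submodule.span ℤ (Set.range fun j : n => fun i : m => B i j)) := by
  obtain ⟨d, hd, Z, hZ⟩ := exists_int_smul_eq_map_intCast hrat
  exact AddSubgroup.discreteTopology_of_forall_le (Submodule.span ℤ _).toAddSubgroup
    (f := fun x => x ⬝ᵥ x) (by fun_prop) (by simpa using hd)
    fun x hx hx0 => one_div_abs_le_dotProduct_self hd hZ hx hx0

theorem stmt_3_general (k n : ℕ) (B : Matrix (Fin k) (Fin n) ℝ)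
    (hspan : Submodule.span ℝ (Set.range fun j : Fin n => fun i : Fin k => B i j) = ⊤)
    (hParseval : B * B.transpose = 1) :
    DiscreteTopology ↥(Set.range fun a : Fin n → ℤ => B.mulVec fun i => (a i : ℝ))
      ↔ ∀ i j : Fin n, ∃ q : ℚ, (B.transpose * B) i j = q := by
  rw [range_mulVec_intCast_eq_span]
  refine ⟨fun _ => ?_, discreteTopology_span_of_rat_transpose_mul_self⟩
  obtain ⟨M, C, hB⟩ := exists_eq_mul_map_intCast_of_discreteTopology B hspan
  exact exists_rat_transpose_mul_self_of_eq_mul_map_intCast hB hParseval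

/-- For a Parseval tight frame (columns of `B` with `B * Bᵀ = 1` spanning `ℝ^k`),
the integer span of the columns is discrete if and only if the Gram matrix `Bᵀ * B`
has rational entries. -/
theorem stmt_3 (k n : ℕ) (hkn : k ≤ n) (B : Matrix (Fin k) (Fin n) ℝ)
    (hspan : Submodule.span ℝ (Set.range fun j : Fin n => fun i : Fin k => B i j) = ⊤)
    (hParseval : B * B.transpose = 1) :
    DiscreteTopology ↥(Set.range fun a : Fin n → ℤ => B.mulVec fun i => (a i : ℝ))
      ↔ ∀ i j : Fin n, ∃ q : ℚ, (B.transpose * B) i j = q :=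
  stmt_3_general k n B hspan hParseval
end

section
/- Let A₁ and A₂ be the adjacency matrices of finite simple graphs Δ₁ on m₁ vertices and Δ₂ on m₂ vertices, and let Γ = Δ₁ □ Δ₂ be their Cartesian product with adjacency matrix A_Γ = A₁ ⊗ I_{m₂} + I_{m₁} ⊗ A₂. Let ν be an eigenvalue of A_Γ such that there is a UNIQUE pair (λ, μ) of eigenvalues of A₁ and A₂ with λ + μ = ν, λ, μ ∈ ℚ. Let P, Q be the orthogonal projections onto the λ-eigenspace of A₁ and the μ-eigenspace of A₂ respectively. Then the orthogonal projection onto the ν-eigenspace of A_Γ is P ⊗ Q, and the lattice L_{Γ,ν} = (P ⊗ Q)(ℤ^{m₁m₂}) equals the ℤ-span of the set of Kronecker products {x ⊗ y : x ∈ P(ℤ^{m₁}), y ∈ Q(ℤ^{m₂})}; that is, L_{Γ,ν} = L_{Δ₁,λ} ⊗_ℤ L_{Δ₂,μ}. -/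
/-!
Diagonalise `A₁` and `A₂` by orthonormal eigenvectors `uᵢ`, `vⱼ`. Then `A_Γ` is diagonal in the
basis `uᵢ ⊗ vⱼ`, with eigenvalue `λᵢ + μⱼ`, so a `ν`-eigenvector of `A_Γ` only involves those
`uᵢ ⊗ vⱼ` with `λᵢ + μⱼ = ν`, that is, by uniqueness, with `λᵢ = λ` and `μⱼ = μ`; these are fixed
by `P ⊗ Q`. Conversely `A₁ P = λ P` and `A₂ Q = μ Q` give `A_Γ (P ⊗ Q) = ν (P ⊗ Q)`.
The lattice identity holds for any two matrices: `M(ℤⁿ)` is the `ℤ`-span of the columns of `M`,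
and the columns of `P ⊗ Q` are the products of a column of `P` and a column of `Q`.
-/

open Kronecker

namespace Matrix

variable {R : Type*} {l m n p : Type*}

section CommRing

variable [CommRing R]

theorem kronecker_mulVec_prod [Fintype m] [Fintype p] (M : Matrix l m R) (N : Matrix n p R)
    (x : m → R) (y : p → R) :
    (M ⊗ₖ N) *ᵥ (fun q => x q.1 * y q.2) = fun q => (M *ᵥ x) q.1 * (N *ᵥ y) q.2 := by
  ext q
  simp only [mulVec, dotProduct, kroneckerMap_apply, Fintype.sum_prod_type, Finset.sum_mul_sum]
  exact Finset.sum_congr rfl fun i _ => Finset.sum_congr rfl fun j _ => by ring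

theorem mem_ker_toLin'_sub_smul_one_iff [Fintype n] [DecidableEq n] {A : Matrix n n R} {c : R}
    {x : n → R} : x ∈ LinearMap.ker (toLin' (A - c • 1)) ↔ A *ᵥ x = c • x := by
  rw [LinearMap.mem_ker, toLin'_apply, sub_mulVec, smul_mulVec, one_mulVec, sub_eq_zero]

theorem mul_eq_smul_of_forall_mulVec [Fintype n] [Fintype m] [DecidableEq m] {A : Matrix n n R}
    {B : Matrix n m R} {c : R} (h : ∀ x, A *ᵥ (B *ᵥ x) = c • B *ᵥ x) : A * B = c • B :=
  toLin'.injective <| LinearMap.ext fun x => by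
    simp only [toLin'_apply, ← mulVec_mulVec, h, smul_mulVec]

theorem kroneckerSum_mul_kronecker [Fintype l] [Fintype m] [Fintype n] [Fintype p]
    [DecidableEq l] [DecidableEq m] [DecidableEq n] [DecidableEq p]
    {A₁ : Matrix m m R} {K₁ : Matrix m l R} {D₁ : Matrix l l R}
    {A₂ : Matrix n n R} {K₂ : Matrix n p R} {D₂ : Matrix p p R}
    (h₁ : A₁ * K₁ = K₁ * D₁) (h₂ : A₂ * K₂ = K₂ * D₂) :
    (A₁ ⊗ₖ 1 + 1 ⊗ₖ A₂) * (K₁ ⊗ₖ K₂) = (K₁ ⊗ₖ K₂) * (D₁ ⊗ₖ 1 + 1 ⊗ₖ D₂) := by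
  rw [Matrix.add_mul, Matrix.mul_add, ← mul_kronecker_mul, ← mul_kronecker_mul,
    ← mul_kronecker_mul, ← mul_kronecker_mul, Matrix.one_mul, Matrix.one_mul, Matrix.mul_one,
    Matrix.mul_one, h₁, h₂]

theorem kroneckerSum_mul_kronecker_eq_smul [Fintype m] [Fintype n] [DecidableEq m]
    [DecidableEq n] {A₁ : Matrix m m R} {P : Matrix m l R} {A₂ : Matrix n n R} {Q : Matrix n p R}
    {a b : R} (h₁ : A₁ * P = a • P) (h₂ : A₂ * Q = b • Q) :
    (A₁ ⊗ₖ 1 + 1 ⊗ₖ A₂) * (P ⊗ₖ Q) = (a + b) • (P ⊗ₖ Q) := by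
  rw [Matrix.add_mul, ← mul_kronecker_mul, ← mul_kronecker_mul, Matrix.one_mul, Matrix.one_mul,
    h₁, h₂, smul_kronecker, kronecker_smul, add_smul]

theorem kroneckerSum_diagonal [DecidableEq m] [DecidableEq n] (d₁ : m → R) (d₂ : n → R) :
    diagonal d₁ ⊗ₖ 1 + 1 ⊗ₖ diagonal d₂ = diagonal fun q => d₁ q.1 + d₂ q.2 := by
  rw [← diagonal_one, ← diagonal_one, diagonal_kronecker_diagonal, diagonal_kronecker_diagonal,
    diagonal_add]
  simp

theorem range_mulVec_intCast_eq_span_s13 [Fintype n] (M : Matrix m n R) :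
    Set.range (fun a : n → ℤ => M *ᵥ fun i => (a i : R)) =
      Submodule.span ℤ (Set.range M.col) := by
  ext x
  rw [SetLike.mem_coe, Submodule.mem_span_range_iff_exists_fun]
  simp only [Set.mem_range, mulVec_eq_sum, op_smul_eq_smul, Int.cast_smul_eq_zsmul, col_def]

theorem col_mem_range_mulVec_intCast [Fintype n] (M : Matrix m n R) (j : n) :
    M.col j ∈ Set.range (fun a : n → ℤ => M *ᵥ fun i => (a i : R)) :=
  (range_mulVec_intCast_eq_span_s13 M).symm ▸ Submodule.subset_span ⟨j, rfl⟩

theorem range_kronecker_mulVec_intCast [Fintype m] [Fintype n] (P : Matrix l m R)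
    (Q : Matrix p n R) :
    (Set.range fun a : m × n → ℤ => (P ⊗ₖ Q) *ᵥ fun q => (a q : R)) =
      AddSubgroup.closure
        {z : l × p → R | ∃ x ∈ Set.range (fun a : m → ℤ => P *ᵥ fun i => (a i : R)),
          ∃ y ∈ Set.range (fun b : n → ℤ => Q *ᵥ fun j => (b j : R)),
            z = fun q => x q.1 * y q.2} := by
  rw [← Submodule.span_int_eq_addSubgroupClosure, range_mulVec_intCast_eq_span_s13,
    Submodule.coe_toAddSubgroup]
  congr 1
  refine le_antisymm (Submodule.span_le.mpr ?_) (Submodule.span_le.mpr ?_)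
  · rintro _ ⟨⟨i, j⟩, rfl⟩
    exact Submodule.subset_span
      ⟨_, col_mem_range_mulVec_intCast P i, _, col_mem_range_mulVec_intCast Q j, rfl⟩
  · rintro _ ⟨_, ⟨a, rfl⟩, _, ⟨b, rfl⟩, rfl⟩
    rw [← range_mulVec_intCast_eq_span_s13, ← kronecker_mulVec_prod]
    exact ⟨fun q => a q.1 * b q.2, by push_cast; rfl⟩

theorem mulVec_eq_self_of_mulVec_eq_smul [IsDomain R] [Fintype n] [DecidableEq n]
    {A K K' M : Matrix n n R} {d : n → R} {ν : R} (hK : K' * K = 1)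
    (hAK : A * K = K * diagonal d) (hM : ∀ q, d q = ν → M *ᵥ K.col q = K.col q)
    {z : n → R} (hz : A *ᵥ z = ν • z) : M *ᵥ z = z := by
  have hK' : K * K' = 1 := mul_eq_one_comm.mp hK
  -- the coordinates of `z` in the basis of eigenvectors formed by the columns of `K`
  set c := K' *ᵥ z
  have hzc : z = K *ᵥ c := by rw [mulVec_mulVec, hK', one_mulVec]
  have hK'A : K' * A = diagonal d * K' := by
    calc K' * A = K' * (A * K) * K' := by rw [← mul_assoc, mul_assoc _ K, hK', mul_one]
      _ = diagonal d * K' := by rw [hAK, ← mul_assoc, hK, one_mul]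
  have hc : diagonal d *ᵥ c = ν • c := by
    rw [mulVec_mulVec, ← hK'A, ← mulVec_mulVec, hz, mulVec_smul]
  have hsupp : ∀ q, c q ≠ 0 → d q = ν := fun q hq =>
    mul_right_cancel₀ hq (by simpa [mulVec_diagonal] using congrFun hc q)
  rw [hzc, mulVec_eq_sum c K, mulVec_sum]
  refine Finset.sum_congr rfl fun q _ => ?_
  rw [op_smul_eq_smul, mulVec_smul]
  by_cases hq : c q = 0
  · simp [hq]
  · exact congrArg (c q • ·) (hM q (hsupp q hq))

end CommRing

section RCLike

variable {𝕜 : Type*} [RCLike 𝕜] [Fintype m] [DecidableEq m] [Fintype n] [DecidableEq n]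

theorem IsHermitian.mul_eigenvectorUnitary {A : Matrix n n 𝕜} (hA : A.IsHermitian) :
    A * (hA.eigenvectorUnitary : Matrix n n 𝕜) =
      (hA.eigenvectorUnitary : Matrix n n 𝕜) * diagonal (RCLike.ofReal ∘ hA.eigenvalues) := by
  nth_rewrite 1 [hA.spectral_theorem]
  rw [Unitary.conjStarAlgAut_apply, mul_assoc, mul_assoc, Unitary.coe_star_mul_self, mul_one]

theorem IsHermitian.mulVec_col_eigenvectorUnitary {A : Matrix n n 𝕜} (hA : A.IsHermitian)
    (j : n) :
    A *ᵥ (hA.eigenvectorUnitary : Matrix n n 𝕜).col j =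
      (hA.eigenvalues j : 𝕜) • (hA.eigenvectorUnitary : Matrix n n 𝕜).col j := by
  rw [← RCLike.real_smul_eq_coe_smul]
  exact hA.mulVec_eigenvectorBasis j

theorem IsHermitian.col_eigenvectorUnitary_ne_zero {A : Matrix n n 𝕜} (hA : A.IsHermitian)
    (j : n) : (hA.eigenvectorUnitary : Matrix n n 𝕜).col j ≠ 0 := by
  intro h
  have := hA.star_eigenvectorUnitary_mulVec j
  rw [← eigenvectorUnitary_col_eq, h, mulVec_zero] at this
  simpa using congrFun this j

theorem IsHermitian.kronecker_mulVec_eq_self {A₁ : Matrix m m 𝕜} {A₂ : Matrix n n 𝕜}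
    (h₁ : A₁.IsHermitian) (h₂ : A₂.IsHermitian) {P : Matrix m m 𝕜} {Q : Matrix n n 𝕜}
    {a b ν : ℝ}
    (hunique : ∀ i j, h₁.eigenvalues i + h₂.eigenvalues j = ν →
      h₁.eigenvalues i = a ∧ h₂.eigenvalues j = b)
    (hP : ∀ x, A₁ *ᵥ x = (a : 𝕜) • x → P *ᵥ x = x)
    (hQ : ∀ y, A₂ *ᵥ y = (b : 𝕜) • y → Q *ᵥ y = y)
    {z : m × n → 𝕜} (hz : (A₁ ⊗ₖ 1 + 1 ⊗ₖ A₂) *ᵥ z = (ν : 𝕜) • z) : (P ⊗ₖ Q) *ᵥ z = z := by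
  set U₁ : Matrix m m 𝕜 := ↑h₁.eigenvectorUnitary
  set U₂ : Matrix n n 𝕜 := ↑h₂.eigenvectorUnitary
  refine mulVec_eq_self_of_mulVec_eq_smul (K := U₁ ⊗ₖ U₂) (K' := star U₁ ⊗ₖ star U₂)
    (d := fun q => (h₁.eigenvalues q.1 : 𝕜) + h₂.eigenvalues q.2) ?_ ?_ ?_ hz
  · rw [← mul_kronecker_mul, Unitary.coe_star_mul_self, Unitary.coe_star_mul_self,
      one_kronecker_one]
  · rw [kroneckerSum_mul_kronecker h₁.mul_eigenvectorUnitary h₂.mul_eigenvectorUnitary,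
      kroneckerSum_diagonal]
    rfl
  · intro q hq
    obtain ⟨ha, hb⟩ := hunique q.1 q.2 (by exact_mod_cast hq)
    have hcol : (U₁ ⊗ₖ U₂).col q = fun p => U₁.col q.1 p.1 * U₂.col q.2 p.2 := rfl
    rw [hcol, kronecker_mulVec_prod, hP _ (ha ▸ h₁.mulVec_col_eigenvectorUnitary q.1),
      hQ _ (hb ▸ h₂.mulVec_col_eigenvectorUnitary q.2)]

end RCLike

end Matrix

theorem stmt_13_general (m₁ m₂ : ℕ)
    (Δ₁ : SimpleGraph (Fin m₁)) [DecidableRel Δ₁.Adj]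
    (Δ₂ : SimpleGraph (Fin m₂)) [DecidableRel Δ₂.Adj]
    (A₁ : Matrix (Fin m₁) (Fin m₁) ℝ) (hA₁ : A₁ = Δ₁.adjMatrix ℝ)
    (A₂ : Matrix (Fin m₂) (Fin m₂) ℝ) (hA₂ : A₂ = Δ₂.adjMatrix ℝ)
    (AΓ : Matrix (Fin m₁ × Fin m₂) (Fin m₁ × Fin m₂) ℝ)
    (hAΓ : AΓ = A₁ ⊗ₖ (1 : Matrix (Fin m₂) (Fin m₂) ℝ)
      + (1 : Matrix (Fin m₁) (Fin m₁) ℝ) ⊗ₖ A₂)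
    (lam mu : ℚ) (ν : ℝ) (hν : ν = (lam : ℝ) + (mu : ℝ))
    (hunique : ∀ a b : ℝ, (∃ x : Fin m₁ → ℝ, x ≠ 0 ∧ A₁.mulVec x = a • x) →
      (∃ y : Fin m₂ → ℝ, y ≠ 0 ∧ A₂.mulVec y = b • y) → a + b = ν →
      a = (lam : ℝ) ∧ b = (mu : ℝ))
    (V : Submodule ℝ (Fin m₁ → ℝ))
    (hV : V = LinearMap.ker
      (Matrix.toLin' (A₁ - (lam : ℝ) • (1 : Matrix (Fin m₁) (Fin m₁) ℝ))))
    (W : Submodule ℝ (Fin m₂ → ℝ))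
    (hW : W = LinearMap.ker
      (Matrix.toLin' (A₂ - (mu : ℝ) • (1 : Matrix (Fin m₂) (Fin m₂) ℝ))))
    (U : Submodule ℝ (Fin m₁ × Fin m₂ → ℝ))
    (hU : U = LinearMap.ker
      (Matrix.toLin' (AΓ - ν • (1 : Matrix (Fin m₁ × Fin m₂) (Fin m₁ × Fin m₂) ℝ))))
    (P : Matrix (Fin m₁) (Fin m₁) ℝ)
    (hPsymm : P.transpose = P) (hPidem : P * P = P)
    (hPrange : ∀ x, P.mulVec x ∈ V) (hPfix : ∀ x ∈ V, P.mulVec x = x)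
    (Q : Matrix (Fin m₂) (Fin m₂) ℝ)
    (hQsymm : Q.transpose = Q) (hQidem : Q * Q = Q)
    (hQrange : ∀ y, Q.mulVec y ∈ W) (hQfix : ∀ y ∈ W, Q.mulVec y = y)
    (LP : Set (Fin m₁ → ℝ))
    (hLP : LP = Set.range fun a : Fin m₁ → ℤ => P.mulVec fun i => (a i : ℝ))
    (LQ : Set (Fin m₂ → ℝ))
    (hLQ : LQ = Set.range fun a : Fin m₂ → ℤ => Q.mulVec fun i => (a i : ℝ)) :
    ((P ⊗ₖ Q).transpose = P ⊗ₖ Q) ∧ ((P ⊗ₖ Q) * (P ⊗ₖ Q) = P ⊗ₖ Q) ∧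
    (∀ z, (P ⊗ₖ Q).mulVec z ∈ U) ∧ (∀ z ∈ U, (P ⊗ₖ Q).mulVec z = z) ∧
    (Set.range fun a : Fin m₁ × Fin m₂ → ℤ => (P ⊗ₖ Q).mulVec fun p => (a p : ℝ))
      = (AddSubgroup.closure
          {z : Fin m₁ × Fin m₂ → ℝ | ∃ x ∈ LP, ∃ y ∈ LQ, z = fun p => x p.1 * y p.2}
          : AddSubgroup (Fin m₁ × Fin m₂ → ℝ)) := by
  subst hAΓ hν hV hW hU hLP hLQ
  have h₁ : A₁.IsHermitian := hA₁ ▸ Δ₁.isHermitian_adjMatrix ℝ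
  have h₂ : A₂.IsHermitian := hA₂ ▸ Δ₂.isHermitian_adjMatrix ℝ
  have hAPQ : (A₁ ⊗ₖ 1 + 1 ⊗ₖ A₂) * (P ⊗ₖ Q) = ((lam : ℝ) + mu) • (P ⊗ₖ Q) :=
    Matrix.kroneckerSum_mul_kronecker_eq_smul
      (Matrix.mul_eq_smul_of_forall_mulVec fun x =>
        Matrix.mem_ker_toLin'_sub_smul_one_iff.mp (hPrange x))
      (Matrix.mul_eq_smul_of_forall_mulVec fun y =>
        Matrix.mem_ker_toLin'_sub_smul_one_iff.mp (hQrange y))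
  have heigen : ∀ i j, h₁.eigenvalues i + h₂.eigenvalues j = (lam : ℝ) + mu →
      h₁.eigenvalues i = lam ∧ h₂.eigenvalues j = mu := fun i j =>
    hunique _ _
      ⟨_, h₁.col_eigenvectorUnitary_ne_zero i, h₁.mulVec_col_eigenvectorUnitary i⟩
      ⟨_, h₂.col_eigenvectorUnitary_ne_zero j, h₂.mulVec_col_eigenvectorUnitary j⟩
  refine ⟨by rw [← Matrix.kroneckerMap_transpose, hPsymm, hQsymm],
    by rw [← Matrix.mul_kronecker_mul, hPidem, hQidem], fun z => ?_, fun z hz => ?_,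
    Matrix.range_kronecker_mulVec_intCast P Q⟩
  · rw [Matrix.mem_ker_toLin'_sub_smul_one_iff, Matrix.mulVec_mulVec, hAPQ, Matrix.smul_mulVec]
  · exact h₁.kronecker_mulVec_eq_self h₂ heigen
      (fun x hx => hPfix x (Matrix.mem_ker_toLin'_sub_smul_one_iff.mpr hx))
      (fun y hy => hQfix y (Matrix.mem_ker_toLin'_sub_smul_one_iff.mpr hy))
      (Matrix.mem_ker_toLin'_sub_smul_one_iff.mp hz)

/-- For the Cartesian product graph `Γ = Δ₁ □ Δ₂` and an eigenvalue `ν = λ + μ` of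
`A_Γ = A₁ ⊗ I + I ⊗ A₂` arising from a UNIQUE pair `(λ, μ)` of (rational) eigenvalues
of `A₁, A₂`, the orthogonal projection onto the `ν`-eigenspace is `P ⊗ₖ Q`, and the
lattice `(P ⊗ₖ Q)(ℤ^{m₁m₂})` equals the `ℤ`-span of the Kronecker products `x ⊗ y`
with `x ∈ P(ℤ^{m₁})`, `y ∈ Q(ℤ^{m₂})`, i.e. `L_{Γ,ν} = L_{Δ₁,λ} ⊗_ℤ L_{Δ₂,μ}`. -/
theorem stmt_13 (m₁ m₂ : ℕ)
    (Δ₁ : SimpleGraph (Fin m₁)) [DecidableRel Δ₁.Adj]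
    (Δ₂ : SimpleGraph (Fin m₂)) [DecidableRel Δ₂.Adj]
    (A₁ : Matrix (Fin m₁) (Fin m₁) ℝ) (hA₁ : A₁ = Δ₁.adjMatrix ℝ)
    (A₂ : Matrix (Fin m₂) (Fin m₂) ℝ) (hA₂ : A₂ = Δ₂.adjMatrix ℝ)
    (AΓ : Matrix (Fin m₁ × Fin m₂) (Fin m₁ × Fin m₂) ℝ)
    (hAΓ : AΓ = A₁ ⊗ₖ (1 : Matrix (Fin m₂) (Fin m₂) ℝ)
      + (1 : Matrix (Fin m₁) (Fin m₁) ℝ) ⊗ₖ A₂)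
    (lam mu : ℚ) (ν : ℝ) (hν : ν = (lam : ℝ) + (mu : ℝ))
    (hlam : ∃ x : Fin m₁ → ℝ, x ≠ 0 ∧ A₁.mulVec x = (lam : ℝ) • x)
    (hmu : ∃ y : Fin m₂ → ℝ, y ≠ 0 ∧ A₂.mulVec y = (mu : ℝ) • y)
    (hνeig : ∃ z : Fin m₁ × Fin m₂ → ℝ, z ≠ 0 ∧ AΓ.mulVec z = ν • z)
    (hunique : ∀ a b : ℝ, (∃ x : Fin m₁ → ℝ, x ≠ 0 ∧ A₁.mulVec x = a • x) →
      (∃ y : Fin m₂ → ℝ, y ≠ 0 ∧ A₂.mulVec y = b • y) → a + b = ν →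
      a = (lam : ℝ) ∧ b = (mu : ℝ))
    (V : Submodule ℝ (Fin m₁ → ℝ))
    (hV : V = LinearMap.ker
      (Matrix.toLin' (A₁ - (lam : ℝ) • (1 : Matrix (Fin m₁) (Fin m₁) ℝ))))
    (W : Submodule ℝ (Fin m₂ → ℝ))
    (hW : W = LinearMap.ker
      (Matrix.toLin' (A₂ - (mu : ℝ) • (1 : Matrix (Fin m₂) (Fin m₂) ℝ))))
    (U : Submodule ℝ (Fin m₁ × Fin m₂ → ℝ))
    (hU : U = LinearMap.ker
      (Matrix.toLin' (AΓ - ν • (1 : Matrix (Fin m₁ × Fin m₂) (Fin m₁ × Fin m₂) ℝ))))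
    (P : Matrix (Fin m₁) (Fin m₁) ℝ)
    (hPsymm : P.transpose = P) (hPidem : P * P = P)
    (hPrange : ∀ x, P.mulVec x ∈ V) (hPfix : ∀ x ∈ V, P.mulVec x = x)
    (Q : Matrix (Fin m₂) (Fin m₂) ℝ)
    (hQsymm : Q.transpose = Q) (hQidem : Q * Q = Q)
    (hQrange : ∀ y, Q.mulVec y ∈ W) (hQfix : ∀ y ∈ W, Q.mulVec y = y)
    (LP : Set (Fin m₁ → ℝ))
    (hLP : LP = Set.range fun a : Fin m₁ → ℤ => P.mulVec fun i => (a i : ℝ))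
    (LQ : Set (Fin m₂ → ℝ))
    (hLQ : LQ = Set.range fun a : Fin m₂ → ℤ => Q.mulVec fun i => (a i : ℝ)) :
    ((P ⊗ₖ Q).transpose = P ⊗ₖ Q) ∧ ((P ⊗ₖ Q) * (P ⊗ₖ Q) = P ⊗ₖ Q) ∧
    (∀ z, (P ⊗ₖ Q).mulVec z ∈ U) ∧ (∀ z ∈ U, (P ⊗ₖ Q).mulVec z = z) ∧
    (Set.range fun a : Fin m₁ × Fin m₂ → ℤ => (P ⊗ₖ Q).mulVec fun p => (a p : ℝ))
      = (AddSubgroup.closure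
          {z : Fin m₁ × Fin m₂ → ℝ | ∃ x ∈ LP, ∃ y ∈ LQ, z = fun p => x p.1 * y p.2}
          : AddSubgroup (Fin m₁ × Fin m₂ → ℝ)) :=
  stmt_13_general m₁ m₂ Δ₁ Δ₂ A₁ hA₁ A₂ hA₂ AΓ hAΓ lam mu ν hν hunique V hV W hW U hU P hPsymm
    hPidem hPrange hPfix Q hQsymm hQidem hQrange hQfix LP hLP LQ hLQ
end
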